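/- arXiv:math/0602039 — 4 statements merged into one kernel-verified Lean document; each statement's English description precedes it below -/
import Mathlib

section
/- Let p be a prime, d ≥ 1 an integer, F the free group on d generators, and F_2 = F^p[F,F] the second term of the lower p-series of F. Then F_2 is a maximal fully invariant subgroup of F: F_2 is fully invariant, F_2 ≠ F, and every fully invariant subgroup U of F with F_2 < U satisfies U = F. -/
/-- `pStep p H = H^p [H, G]`: the subgroup generated by all `p`-th powers of elements of `H`
together with all commutators `[x, y]` with `x ∈ H` and `y ∈ G`. -/
def pStep (p : ℕ) {G : Type*} [Group G] (H : Subgroup G) : Subgroup G :=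
  Subgroup.closure ((fun g => g ^ p) '' (H : Set G)) ⊔ ⁅H, (⊤ : Subgroup G)⁆

private def lowerPSeriesAux (p : ℕ) (G : Type*) [Group G] : ℕ → Subgroup G
  | 0 => ⊤
  | (k + 1) => pStep p (lowerPSeriesAux p G k)

/-- The lower `p`-series of `G`, indexed as in the paper: `G_1 = G` and
`G_{i+1} = G_i^p [G_i, G]`.  (The value at `0` is junk, equal to `G_1 = G`.) -/
def lowerPSeries (p : ℕ) (G : Type*) [Group G] (i : ℕ) : Subgroup G :=
  lowerPSeriesAux p G (i - 1)

theorem pStep_le (p : ℕ) {G : Type*} [Group G] {H : Subgroup G} (hH : H.Normal) :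
    pStep p H ≤ H := by
  apply sup_le
  · rw [Subgroup.closure_le]
    rintro _ ⟨h, hh, rfl⟩
    exact H.pow_mem hh p
  · exact Subgroup.commutator_le_left H ⊤

open scoped commutatorElement in
theorem pStep_normal (p : ℕ) {G : Type*} [Group G] {H : Subgroup G} (hH : H.Normal) :
    (pStep p H).Normal := by
  constructor
  intro x hx g
  have hxH : x ∈ H := pStep_le p hH hx
  have : g * x * g⁻¹ = ⁅g, x⁆ * x := by group
  rw [this]
  refine Subgroup.mul_mem _ ?_ hx
  refine le_sup_right (α := Subgroup G) ?_
  have hcomm : (⁅(⊤ : Subgroup G), H⁆ : Subgroup G) = ⁅H, (⊤ : Subgroup G)⁆ :=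
    Subgroup.commutator_comm ⊤ H
  rw [← hcomm]
  exact Subgroup.commutator_mem_commutator (Subgroup.mem_top g) hxH

instance lowerPSeries_normal (p : ℕ) (G : Type*) [Group G] (i : ℕ) :
    (lowerPSeries p G i).Normal := by
  rw [lowerPSeries]
  generalize i - 1 = k
  induction k with
  | zero => show (⊤ : Subgroup G).Normal; infer_instance
  | succ k ih => exact pStep_normal p ih

/-- A group is minimally generated by `d` elements if it is generated by some `d` elements
but by no fewer. -/
def MinGenBy (G : Type*) [Group G] (d : ℕ) : Prop :=
  (∃ S : Finset G, S.card = d ∧ Subgroup.closure (S : Set G) = ⊤) ∧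
    ∀ S : Finset G, Subgroup.closure (S : Set G) = ⊤ → d ≤ S.card

/-- A subgroup is fully invariant if every endomorphism of the group maps it into itself. -/
def FullyInvariant {G : Type*} [Group G] (U : Subgroup G) : Prop :=
  ∀ φ : G →* G, Subgroup.map φ U ≤ U

/-!
`F/F₂` is abelian of exponent `p`, so it is an `𝔽_p`-vector space spanned by the images of the
generators, and `F₂` is the kernel of the mod-`p` exponent-sum map `F → 𝔽_p^d`.
If `U ⊋ F₂` is fully invariant, some `u ∈ U` has exponent sum `c ≢ 0 (mod p)` in a generator
`x_j`. The endomorphism `x_j ↦ x_i`, `x_t ↦ 1` for `t ≠ j`, sends `u^(c⁻¹)` to an element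
congruent to `x_i` modulo `F₂ ≤ U`, so every generator lies in `U`.
-/

section LowerPSeries

variable (p : ℕ) {G : Type*} [Group G]

theorem FullyInvariant.pStep {H : Subgroup G} (hH : FullyInvariant H) :
    FullyInvariant (pStep p H) := by
  intro φ
  rw [_root_.pStep, Subgroup.map_sup, MonoidHom.map_closure, Subgroup.map_commutator]
  refine sup_le_sup (Subgroup.closure_mono ?_) (Subgroup.commutator_mono (hH φ) le_top)
  rintro _ ⟨_, ⟨g, hg, rfl⟩, rfl⟩
  exact ⟨φ g, hH φ (Subgroup.mem_map_of_mem φ hg), (map_pow φ g p).symm⟩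

theorem lowerPSeries_fullyInvariant (i : ℕ) : FullyInvariant (lowerPSeries p G i) := by
  rw [lowerPSeries]
  induction i - 1 with
  | zero => exact fun φ => le_top
  | succ k ih => exact ih.pStep p

instance pStep_top_normal : (pStep p (⊤ : Subgroup G)).Normal :=
  pStep_normal p inferInstance

theorem pow_mem_pStep_top (g : G) : g ^ p ∈ pStep p (⊤ : Subgroup G) :=
  Subgroup.mem_sup_left (Subgroup.subset_closure ⟨g, Subgroup.mem_top g, rfl⟩)

theorem commutator_le_pStep_top : commutator G ≤ pStep p (⊤ : Subgroup G) :=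
  le_sup_right

instance : IsMulCommutative (G ⧸ pStep p (⊤ : Subgroup G)) :=
  Subgroup.Normal.quotient_commutative_iff_commutator_le.mpr (commutator_le_pStep_top p)

theorem quotient_pStep_top_pow_eq_one (q : G ⧸ pStep p (⊤ : Subgroup G)) : q ^ p = 1 := by
  induction q using QuotientGroup.induction_on with
  | H g => exact (QuotientGroup.eq_one_iff _).mpr (pow_mem_pStep_top p g)

theorem pStep_top_le_ker {A : Type*} [CommGroup A] (hA : ∀ a : A, a ^ p = 1) (f : G →* A) :
    pStep p (⊤ : Subgroup G) ≤ f.ker := by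
  refine sup_le ?_ ?_
  · rw [Subgroup.closure_le]
    rintro _ ⟨g, -, rfl⟩
    exact (map_pow f g p).trans (hA (f g))
  · exact Abelianization.commutator_subset_ker f

end LowerPSeries

theorem ZModModule.pow_char_eq_one (p : ℕ) {M : Type*} [AddCommGroup M] [Module (ZMod p) M]
    (x : Multiplicative M) : x ^ p = 1 :=
  congrArg Multiplicative.ofAdd (ZModModule.char_nsmul_eq_zero p x.toAdd)

namespace FreeGroup

variable (p : ℕ) {α : Type*}

noncomputable def exponentSumMod : FreeGroup α →* Multiplicative (α →₀ ZMod p) :=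
  lift fun i => Multiplicative.ofAdd (Finsupp.single i 1)

@[simp]
theorem exponentSumMod_of (i : α) :
    exponentSumMod p (of i) = Multiplicative.ofAdd (Finsupp.single i 1) :=
  lift_apply_of

open scoped IsMulCommutative in
theorem ker_exponentSumMod [NeZero p] :
    (exponentSumMod p).ker = pStep p (⊤ : Subgroup (FreeGroup α)) := by
  refine le_antisymm ?_ (pStep_top_le_ker p (ZModModule.pow_char_eq_one p) _)
  let Q := FreeGroup α ⧸ pStep p (⊤ : Subgroup (FreeGroup α))
  let _ : Module (ZMod p) (Additive Q) := AddCommGroup.zmodModule fun q =>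
    congrArg Additive.ofMul (quotient_pStep_top_pow_eq_one p q.toMul)
  let Ψ : Multiplicative (α →₀ ZMod p) →* Q := AddMonoidHom.toMultiplicativeLeft
    (Finsupp.linearCombination (ZMod p) fun i => Additive.ofMul (of i : Q)).toAddMonoidHom
  have hΨ : Ψ.comp (exponentSumMod p) = QuotientGroup.mk' _ := by
    ext i
    change Ψ (exponentSumMod p (of i)) = (of i : Q)
    simp [Ψ]
  intro u (hu : exponentSumMod p u = 1)
  rw [← QuotientGroup.eq_one_iff, ← QuotientGroup.mk'_apply, ← hΨ, MonoidHom.comp_apply, hu,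
    _root_.map_one]

theorem pStep_top_ne_top [Nonempty α] (hp : p ≠ 1) :
    pStep p (⊤ : Subgroup (FreeGroup α)) ≠ ⊤ := by
  intro htop
  obtain ⟨i⟩ := ‹Nonempty α›
  have hi := pStep_top_le_ker p (ZModModule.pow_char_eq_one p) (exponentSumMod p)
    (htop.symm ▸ Subgroup.mem_top (of i))
  rw [MonoidHom.mem_ker, exponentSumMod_of, ofAdd_eq_one, Finsupp.single_eq_zero,
    ZMod.one_eq_zero_iff] at hi
  exact hp hi

theorem exponentSumMod_lift_mulSingle [DecidableEq α] (j i : α) (u : FreeGroup α) :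
    exponentSumMod p (lift (Pi.mulSingle j (of i)) u) =
      Multiplicative.ofAdd (Finsupp.single i ((exponentSumMod p u).toAdd j)) := by
  suffices (exponentSumMod p).comp (lift (Pi.mulSingle j (of i))) =
      (AddMonoidHom.toMultiplicative
        ((Finsupp.singleAddHom i).comp (Finsupp.applyAddHom j))).comp (exponentSumMod p) from
    DFunLike.congr_fun this u
  ext t
  by_cases h : t = j
  · subst h; simp
  · simp [h]

theorem of_mem_of_exponentSumMod_ne_zero [Fact p.Prime] {U : Subgroup (FreeGroup α)}
    (hU : FullyInvariant U) (hF : pStep p ⊤ ≤ U) {u : FreeGroup α} (hu : u ∈ U) {j : α}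
    (hj : (exponentSumMod p u).toAdd j ≠ 0) (i : α) : of i ∈ U := by
  classical
  set g := lift (Pi.mulSingle j (of i)) u
  set k := ((exponentSumMod p u).toAdd j)⁻¹.val
  have hg : g ∈ U := hU _ ⟨u, hu, rfl⟩
  have hgk : exponentSumMod p (g ^ k) = exponentSumMod p (of i) := by
    rw [map_pow, exponentSumMod_lift_mulSingle, exponentSumMod_of, ← ofAdd_nsmul,
      Finsupp.smul_single, nsmul_eq_mul, ZMod.natCast_zmod_val, inv_mul_cancel₀ hj]
  have hker := (MonoidHom.eq_iff _).mp hgk.symm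
  rw [ker_exponentSumMod] at hker
  rw [← mul_inv_cancel_left (g ^ k) (of i)]
  exact U.mul_mem (U.pow_mem hg k) (hF hker)

theorem eq_top_of_pStep_top_lt [Fact p.Prime] {U : Subgroup (FreeGroup α)}
    (hU : FullyInvariant U) (hlt : pStep p ⊤ < U) : U = ⊤ := by
  obtain ⟨u, hu, hu_notMem⟩ := SetLike.exists_of_lt hlt
  have hne : (exponentSumMod p u).toAdd ≠ 0 := fun h => hu_notMem (ker_exponentSumMod p ▸ h)
  obtain ⟨j, hj⟩ := Finsupp.ne_iff.mp hne
  rw [eq_top_iff, ← closure_range_of, Subgroup.closure_le]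
  rintro _ ⟨i, rfl⟩
  exact of_mem_of_exponentSumMod_ne_zero p hU hlt.le hu hj i

end FreeGroup

/-- **Proposition: `F₂ = F^p[F,F]` is a maximal fully invariant subgroup of the free group
`F` on `d ≥ 1` generators.** -/
theorem second_lowerPSeries_maximal_fully_invariant (p d : ℕ) (hp : p.Prime) (hd : 1 ≤ d) :
    let F := FreeGroup (Fin d)
    FullyInvariant (lowerPSeries p F 2) ∧
      lowerPSeries p F 2 ≠ ⊤ ∧
      ∀ U : Subgroup F, FullyInvariant U → lowerPSeries p F 2 < U → U = ⊤ := by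
  intro F
  have : Fact p.Prime := ⟨hp⟩
  have : Nonempty (Fin d) := ⟨⟨0, hd⟩⟩
  exact ⟨lowerPSeries_fullyInvariant p 2, FreeGroup.pStep_top_ne_top p hp.ne_one,
    fun U hU hlt => FreeGroup.eq_top_of_pStep_top_lt p hU hlt⟩
end

section
/- Let p be a prime, d ≥ 1, and 1 ≤ j ≤ d. In the free associative F_p-algebra F_p⟨x_1,…,x_d⟩, let Λ^n denote the degree-n homogeneous component of the free Lie algebra on x_1,…,x_d, and consider the linear map f ↦ [f, x_j] = f x_j − x_j f. Then: (i) the restriction of this map to Λ^1 has kernel equal to the span of x_j; and (ii) for every n ≥ 2, the restriction of this map to Λ^n is injective, i.e., if f ∈ Λ^n and f x_j = x_j f, then f = 0. -/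
/-- The free associative `𝔽_p`-algebra (noncommutative polynomials) on `d` variables,
realized as the monoid algebra of the free monoid on `d` letters. -/
abbrev FreeAssocAlg (p d : ℕ) := MonoidAlgebra (ZMod p) (FreeMonoid (Fin d))

/-- The generator `x_j`. -/
noncomputable def Xgen (p d : ℕ) (j : Fin d) : FreeAssocAlg p d :=
  MonoidAlgebra.single (FreeMonoid.of j) 1

/-- The degree-`n` homogeneous component: the `𝔽_p`-span of the words of length `n`. -/
noncomputable def homog (p d n : ℕ) : Submodule (ZMod p) (FreeAssocAlg p d) :=
  Submodule.span (ZMod p)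
    {f | ∃ w : FreeMonoid (Fin d), w.length = n ∧ f = MonoidAlgebra.single w 1}

attribute [local instance 100] LieRing.ofAssociativeRing

/-- The free Lie algebra on `x_1, …, x_d`: the Lie subalgebra (under `⁅f,g⁆ = fg - gf`)
of the free associative algebra generated by the `x_j`. -/
noncomputable def freeLie (p d : ℕ) : LieSubalgebra (ZMod p) (FreeAssocAlg p d) :=
  LieSubalgebra.lieSpan (ZMod p) _ (Set.range (Xgen p d))

/-- `Λ^n`: the degree-`n` homogeneous component of the free Lie algebra. -/
noncomputable def lamPart (p d n : ℕ) : Submodule (ZMod p) (FreeAssocAlg p d) :=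
  homog p d n ⊓ (freeLie p d).toSubmodule

/-!
If `f` commutes with `x_j`, comparing coefficients in `f x_j = x_j f` shows that every word in
the support of `f` begins with `j` and that `f` has the same coefficient on a word and on its
cyclic rotation by one letter. Rotating through all letters, every word in the support is a
power of `x_j`, so a homogeneous `f` of degree `n` is `c • x_j ^ n`.

The algebra map to `R[X]` sending `x_j ↦ X` and the other generators to `0` kills all brackets,
as `R[X]` is commutative, so it maps the free Lie algebra into the span of `X`. Since
`c • x_j ^ n ↦ c • X ^ n`, this forces `c = 0` when `n ≥ 2`.
-/

theorem AlgHom.mem_span_image_of_mem_lieSpan {R A B : Type*} [CommRing R] [Ring A] [Algebra R A]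
    [CommRing B] [Algebra R B] (φ : A →ₐ[R] B) {s : Set A} {x : A}
    (hx : x ∈ LieSubalgebra.lieSpan R A s) : φ x ∈ Submodule.span R (φ '' s) := by
  induction hx using LieSubalgebra.lieSpan_induction with
  | mem x hx => exact Submodule.subset_span (Set.mem_image_of_mem φ hx)
  | zero => simp
  | add x y _ _ hx hy => simpa using add_mem hx hy
  | smul r x _ hx => simpa using Submodule.smul_mem _ r hx
  | lie x y _ _ _ _ => simp [LieRing.of_associative_ring_bracket, mul_comm]

section FreeMonoidAlgebra

open MonoidAlgebra FreeMonoid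

theorem FreeMonoid.of_pow_eq_ofList_replicate {α : Type*} (a : α) (n : ℕ) :
    of a ^ n = ofList (List.replicate n a) := by
  induction n with
  | zero => rfl
  | succ n ih => rw [pow_succ, ih, List.replicate_succ', ofList_append]; rfl

variable {R α : Type*} {a : α}

section Semiring

variable [Semiring R] {f : MonoidAlgebra R (FreeMonoid α)}

theorem exists_eq_cons_of_commute (h : Commute f (single (of a) 1)) {l : List α}
    (hl : f.coeff (ofList l) ≠ 0) (hne : l ≠ []) :
    ∃ l', l = a :: l' ∧ f.coeff (ofList (l' ++ [a])) = f.coeff (ofList l) := by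
  obtain ⟨b, l', rfl⟩ := List.exists_cons_of_ne_nil hne
  have hcoeff : (single (of a) 1 * f).coeff (ofList (b :: l') * of a) =
      f.coeff (ofList (b :: l')) := by
    rw [← h.eq, coeff_mul_single_mul, mul_one]
  obtain rfl : b = a := by
    by_contra hba
    refine hl (hcoeff.symm.trans (coeff_single_mul_of_forall_mul_ne _ _ fun w hw => hba ?_))
    simpa using congrArg (List.head? ∘ toList) hw.symm
  refine ⟨l', rfl, ?_⟩
  rw [← hcoeff, ofList_cons, mul_assoc, coeff_single_mul_mul, one_mul, ofList_append,
    ofList_singleton]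

theorem coeff_rotate_of_commute (h : Commute f (single (of a) 1)) {l : List α}
    (hl : f.coeff (ofList l) ≠ 0) (k : ℕ) :
    f.coeff (ofList (l.rotate k)) = f.coeff (ofList l) := by
  induction k with
  | zero => rw [List.rotate_zero]
  | succ k ih =>
    rcases eq_or_ne l [] with rfl | hne
    · simp
    obtain ⟨l', hl', hrot⟩ :=
      exists_eq_cons_of_commute h (ih ▸ hl) (by simpa [List.rotate_eq_nil_iff])
    rw [← List.rotate_rotate, hl', List.rotate_cons_succ, List.rotate_zero, hrot, ih]

theorem eq_replicate_of_commute (h : Commute f (single (of a) 1)) {l : List α}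
    (hl : f.coeff (ofList l) ≠ 0) : l = List.replicate l.length a := by
  refine List.eq_replicate_iff.2 ⟨rfl, fun b hb => ?_⟩
  obtain ⟨i, hi, rfl⟩ := List.mem_iff_getElem.1 hb
  have hne : l.rotate i ≠ [] := by simpa [List.rotate_eq_nil_iff] using List.ne_nil_of_mem hb
  obtain ⟨l', hl', -⟩ :=
    exists_eq_cons_of_commute h ((coeff_rotate_of_commute h hl i).symm ▸ hl) hne
  simpa [hl', Nat.mod_eq_of_lt hi] using (List.getElem_rotate l i 0 (by simp [hi.trans_le'])).symm

theorem mem_span_pow_of_commute {n : ℕ}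
    (hf : f ∈ supported R R {w : FreeMonoid α | w.length = n}) (h : Commute f (single (of a) 1)) :
    f ∈ R ∙ single (of a) 1 ^ n := by
  classical
  refine Submodule.mem_span_singleton.2 ⟨f.coeff (of a ^ n), ?_⟩
  rw [single_pow, one_pow, smul_single', mul_one]
  ext w
  by_cases hw : w = of a ^ n
  · simp [hw]
  rw [coeff_single, Finsupp.single_apply, if_neg (Ne.symm hw)]
  by_contra hfw
  have hlen : w.length = n := hf (Finsupp.mem_support_iff.2 (Ne.symm hfw))
  refine hw ?_
  rw [of_pow_eq_ofList_replicate, ← hlen, ← ofList_toList w]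
  exact congrArg ofList (eq_replicate_of_commute h (by rwa [ofList_toList, ne_comm]))

end Semiring

open Polynomial in
theorem eq_zero_of_smul_pow_mem_lieSpan [CommRing R] {n : ℕ} (hn : 2 ≤ n) {c : R}
    (hc : c • single (of a) 1 ^ n ∈ LieSubalgebra.lieSpan R (MonoidAlgebra R (FreeMonoid α))
      (Set.range fun b => single (of b) 1)) : c = 0 := by
  classical
  let φ := MonoidAlgebra.lift R R[X] (FreeMonoid α) (FreeMonoid.lift (Pi.single a X))
  have hφ : φ ∘ (fun b => single (of b) 1) = Pi.single a X := by
    ext1 b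
    simp [φ, lift_single]
  have hspan : Submodule.span R (Set.range (Pi.single a X : α → R[X])) ≤ R ∙ X := by
    rw [Submodule.span_le, Set.range_subset_iff]
    intro b
    rcases eq_or_ne b a with rfl | hb
    · simp [Submodule.mem_span_singleton_self]
    · simp [hb]
  have hmem := φ.mem_span_image_of_mem_lieSpan hc
  rw [← Set.range_comp, hφ] at hmem
  obtain ⟨r, hr⟩ := Submodule.mem_span_singleton.1 (hspan hmem)
  have hcoeff := congrArg (Polynomial.coeff · n) hr
  simp only [map_smul, map_pow, φ, lift_single, one_smul, lift_eval_of, Pi.single_eq_same,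
    Polynomial.coeff_smul, Polynomial.coeff_X_pow,
    Polynomial.coeff_X_of_ne_one (by omega : n ≠ 1)] at hcoeff
  simpa using hcoeff.symm

theorem homog_eq_supported (p d n : ℕ) :
    homog p d n = supported (ZMod p) (ZMod p) {w : FreeMonoid (Fin d) | w.length = n} := by
  rw [homog, supported_eq_span_single]
  congr 1
  ext f
  simp [eq_comm]

end FreeMonoidAlgebra

theorem bracket_with_generator_injective_general (p d : ℕ) (j : Fin d) :
    (∀ f ∈ lamPart p d 1,
      (f * Xgen p d j - Xgen p d j * f = 0 ↔
        f ∈ Submodule.span (ZMod p) {Xgen p d j})) ∧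
    (∀ n : ℕ, 2 ≤ n → ∀ f ∈ lamPart p d n,
      f * Xgen p d j = Xgen p d j * f → f = 0) := by
  have mem_span_pow : ∀ n, ∀ f ∈ homog p d n, f * Xgen p d j = Xgen p d j * f →
      f ∈ ZMod p ∙ Xgen p d j ^ n := fun n f hf h =>
    mem_span_pow_of_commute (homog_eq_supported p d n ▸ hf) h
  refine ⟨fun f hf => ⟨fun h => ?_, fun h => ?_⟩, fun n hn f hf h => ?_⟩
  · simpa using mem_span_pow 1 f hf.1 (sub_eq_zero.1 h)
  · obtain ⟨c, rfl⟩ := Submodule.mem_span_singleton.1 h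
    rw [smul_mul_assoc, mul_smul_comm, sub_self]
  · obtain ⟨c, rfl⟩ := Submodule.mem_span_singleton.1 (mem_span_pow n f hf.1 h)
    rw [eq_zero_of_smul_pow_mem_lieSpan hn hf.2, zero_smul]

/-- **Lemma (injectivity of bracketing with a generator on the free Lie algebra).**
In the free associative `𝔽_p`-algebra on `x_1, …, x_d`, consider `f ↦ [f, x_j]`.
(i) On `Λ^1` its kernel is the span of `x_j`; (ii) for `n ≥ 2` it is injective on `Λ^n`. -/
theorem bracket_with_generator_injective (p d : ℕ) [Fact p.Prime] (hd : 1 ≤ d) (j : Fin d) :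
    (∀ f ∈ lamPart p d 1,
      (f * Xgen p d j - Xgen p d j * f = 0 ↔
        f ∈ Submodule.span (ZMod p) {Xgen p d j})) ∧
    (∀ n : ℕ, 2 ≤ n → ∀ f ∈ lamPart p d n,
      f * Xgen p d j = Xgen p d j * f → f = 0) :=
  bracket_with_generator_injective_general p d j
end

section
/- Let q > 1 be a real number, let a > 0 and b, c be real numbers, set f(x) = −a x² + b x + c, and let t ≤ u be real numbers. Then the sum of q^{f(r)} over all integers r with t ≤ r ≤ u satisfies ∑_{r∈ℤ, t≤r≤u} q^{f(r)} ≤ C(q^a) · q^{f(y)}, where y ∈ [t, u] is a point at which f attains its maximum on [t, u] (in particular, the sum is at most C(q^a) times the supremum of q^{f(x)} over x ∈ [t, u]). -/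
/-!
Since `y` maximises the concave quadratic `f` on `[t, u]`, the first-order condition
`f'(y) (r - y) ≤ 0` gives `f(r) ≤ f(y) - a (r - y)²` on `[t, u]`. So the sum is at most
`q^{f(y)} ∑_{n ∈ ℤ} s^{-(n - y)²}` with `s = q^a`, and a shifted theta sum never exceeds the
unshifted one: by Poisson summation `∑ₙ s^{-(n - v)²}` is a positive multiple of
`∑ₙ e^{-π² n² / log s} e^{2π i n v}`, whose modulus is largest at `v = 0`.
-/

/-- `C(q) = ∑_{r ∈ ℤ} q^{-r²}`. -/
noncomputable def Cfun (q : ℝ) : ℝ := ∑' r : ℤ, q ^ (-((r : ℝ) ^ 2))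

/-- `D(q) = ∏_{j=1}^∞ (1 - q^{-j})⁻¹`. -/
noncomputable def Dfun (q : ℝ) : ℝ := ∏' j : ℕ, (1 - q ^ (-((j : ℝ) + 1)))⁻¹

/-- The Gaussian coefficient `[n choose k]_q = ∏_{i=0}^{k-1} (q^n - q^i)/(q^k - q^i)`. -/
noncomputable def gaussR (q : ℝ) (n k : ℕ) : ℝ :=
  ∏ i ∈ Finset.range k, ((q ^ n - q ^ i) / (q ^ k - q ^ i))

/-- The Galois number `𝒢_n(q) = ∑_{k=0}^n [n choose k]_q`. -/
noncomputable def galoisR (q : ℝ) (n : ℕ) : ℝ := ∑ k ∈ Finset.range (n + 1), gaussR q n k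

open Real

lemma summable_exp_neg_mul_sq_sub {L : ℝ} (hL : 0 < L) (v : ℝ) :
    Summable fun n : ℤ ↦ rexp (-L * (n - v) ^ 2) := by
  refine (HurwitzKernelBounds.summable_f_int 0 (-v) (div_pos hL pi_pos)).congr fun n ↦ ?_
  simp only [HurwitzKernelBounds.f_int, pow_zero, one_mul]
  congr 1
  field_simp
  ring

lemma tsum_exp_neg_quadratic_le {a : ℝ} (ha : 0 < a) (b : ℝ) :
    ∑' n : ℤ, rexp (-π * a * n ^ 2 + 2 * π * b * n) ≤
      rexp (π * b ^ 2 / a) * ∑' n : ℤ, rexp (-π * a * n ^ 2) := by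
  have hnorm (n : ℤ) : ‖Complex.exp (-π / a * (n + Complex.I * b) ^ 2)‖ =
      rexp (π * b ^ 2 / a) * rexp (-(π / a) * n ^ 2) := by
    rw [Complex.norm_exp, ← Real.exp_add]
    congr 1
    have hsplit : -π / a * (n + Complex.I * b) ^ 2 =
        ((π * b ^ 2 / a - π / a * n ^ 2 : ℝ) : ℂ) +
          ((-2 * π * b * n / a : ℝ) : ℂ) * Complex.I := by
      push_cast
      ring_nf
      rw [Complex.I_sq]
      ring
    rw [hsplit, Complex.add_re, Complex.ofReal_re, Complex.re_ofReal_mul, Complex.I_re]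
    ring
  have hsummable : Summable fun n : ℤ ↦ rexp (π * b ^ 2 / a) * rexp (-(π / a) * n ^ 2) := by
    simpa using (summable_exp_neg_mul_sq_sub (div_pos pi_pos ha) 0).mul_left _
  have hfactor : ‖(1 : ℂ) / (a : ℂ) ^ (1 / 2 : ℂ)‖ = 1 / a ^ (1 / 2 : ℝ) := by
    have hreal : (1 : ℂ) / (a : ℂ) ^ (1 / 2 : ℂ) = ((1 / a ^ (1 / 2 : ℝ) : ℝ) : ℂ) := by
      push_cast [Complex.ofReal_cpow ha.le]
      rfl
    rw [hreal, Complex.norm_real, Real.norm_of_nonneg (by positivity)]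
  have hpoisson := Complex.tsum_exp_neg_quadratic (a := a) (by simpa using ha) b
  calc ∑' n : ℤ, rexp (-π * a * n ^ 2 + 2 * π * b * n)
      = ‖(1 : ℂ) / (a : ℂ) ^ (1 / 2 : ℂ) *
          ∑' n : ℤ, Complex.exp (-π / a * (n + Complex.I * b) ^ 2)‖ := by
        rw [← hpoisson, ← Real.norm_of_nonneg (tsum_nonneg fun _ ↦ (exp_pos _).le),
          ← Complex.norm_real]
        push_cast
        rfl
    _ ≤ 1 / a ^ (1 / 2 : ℝ) *
          ∑' n : ℤ, rexp (π * b ^ 2 / a) * rexp (-(π / a) * n ^ 2) := by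
        rw [norm_mul, hfactor, ← tsum_congr hnorm]
        gcongr
        exact norm_tsum_le_tsum_norm (hsummable.congr fun n ↦ (hnorm n).symm)
    _ = rexp (π * b ^ 2 / a) * ∑' n : ℤ, rexp (-π * a * n ^ 2) := by
        rw [Real.tsum_exp_neg_mul_int_sq ha, tsum_mul_left]
        ring_nf

lemma tsum_exp_neg_mul_sq_sub_le {L : ℝ} (hL : 0 < L) (v : ℝ) :
    ∑' n : ℤ, rexp (-L * (n - v) ^ 2) ≤ ∑' n : ℤ, rexp (-L * n ^ 2) := by
  have hsplit (n : ℤ) : rexp (-L * (n - v) ^ 2) =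
      rexp (-(L * v ^ 2)) * rexp (-π * (L / π) * n ^ 2 + 2 * π * (L * v / π) * n) := by
    rw [← Real.exp_add]
    congr 1
    field_simp
    ring
  have hconst : π * (L * v / π) ^ 2 / (L / π) = L * v ^ 2 := by
    field_simp
  calc ∑' n : ℤ, rexp (-L * (n - v) ^ 2)
      = rexp (-(L * v ^ 2)) *
          ∑' n : ℤ, rexp (-π * (L / π) * n ^ 2 + 2 * π * (L * v / π) * n) := by
        rw [tsum_congr hsplit, tsum_mul_left]
    _ ≤ rexp (-(L * v ^ 2)) *
          (rexp (L * v ^ 2) * ∑' n : ℤ, rexp (-π * (L / π) * n ^ 2)) := by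
        gcongr
        exact hconst ▸ tsum_exp_neg_quadratic_le (div_pos hL pi_pos) (L * v / π)
    _ = ∑' n : ℤ, rexp (-L * n ^ 2) := by
        rw [← mul_assoc, ← Real.exp_add, neg_add_cancel, Real.exp_zero, one_mul]
        field_simp

lemma sum_rpow_neg_sq_sub_le_Cfun {s : ℝ} (hs : 1 < s) (S : Finset ℤ) (v : ℝ) :
    ∑ r ∈ S, s ^ (-((r : ℝ) - v) ^ 2) ≤ Cfun s := by
  have hlog := Real.log_pos hs
  simp only [Cfun, rpow_def_of_pos (zero_lt_one.trans hs), mul_neg, ← neg_mul]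
  calc ∑ r ∈ S, rexp (-log s * ((r : ℝ) - v) ^ 2)
      ≤ ∑' n : ℤ, rexp (-log s * ((n : ℝ) - v) ^ 2) :=
        (summable_exp_neg_mul_sq_sub hlog v).sum_le_tsum S fun _ _ ↦ (exp_pos _).le
    _ ≤ ∑' n : ℤ, rexp (-log s * (n : ℝ) ^ 2) := tsum_exp_neg_mul_sq_sub_le hlog v

lemma neg_quadratic_le_of_isMaxOn {s : Set ℝ} (hs : Convex ℝ s) {a b c y r : ℝ}
    (hy : y ∈ s) (hmax : IsMaxOn (fun x ↦ -a * x ^ 2 + b * x + c) s y) (hr : r ∈ s) :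
    -a * r ^ 2 + b * r + c ≤ -a * y ^ 2 + b * y + c - a * (r - y) ^ 2 := by
  have hderiv : HasDerivAt (fun x ↦ -a * x ^ 2 + b * x + c) (-a * (2 * y) + b) y := by
    simpa using (((hasDerivAt_pow 2 y).const_mul (-a)).add
      ((hasDerivAt_id' y).const_mul b)).add_const c
  have hfermat := hmax.localize.hasFDerivWithinAt_nonpos
    hderiv.hasDerivWithinAt.hasFDerivWithinAt
    (sub_mem_posTangentConeAt_of_segment_subset (hs.segment_subset hy hr))
  simp only [ContinuousLinearMap.toSpanSingleton_apply, smul_eq_mul] at hfermat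
  linear_combination hfermat

theorem quadratic_sum_le_theta_bound_general (q a b c t u y : ℝ) (hq : 1 < q) (ha : 0 < a)
    (hy : y ∈ Set.Icc t u)
    (hmax : ∀ z ∈ Set.Icc t u, -a * z ^ 2 + b * z + c ≤ -a * y ^ 2 + b * y + c) :
    ∑ r ∈ Finset.Icc ⌈t⌉ ⌊u⌋, q ^ (-a * (r : ℝ) ^ 2 + b * (r : ℝ) + c) ≤
      Cfun (q ^ a) * q ^ (-a * y ^ 2 + b * y + c) := by
  have hq₀ : 0 < q := zero_lt_one.trans hq
  have hterm : ∀ r ∈ Finset.Icc ⌈t⌉ ⌊u⌋, q ^ (-a * (r : ℝ) ^ 2 + b * (r : ℝ) + c) ≤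
      q ^ (-a * y ^ 2 + b * y + c) * (q ^ a) ^ (-((r : ℝ) - y) ^ 2) := by
    intro r hr
    rw [Finset.mem_Icc, Int.ceil_le, Int.le_floor] at hr
    have hquad := neg_quadratic_le_of_isMaxOn (convex_Icc t u) hy (isMaxOn_iff.mpr hmax) hr
    rw [← rpow_mul hq₀.le, ← rpow_add hq₀]
    exact rpow_le_rpow_of_exponent_le hq.le (by linarith)
  calc ∑ r ∈ Finset.Icc ⌈t⌉ ⌊u⌋, q ^ (-a * (r : ℝ) ^ 2 + b * (r : ℝ) + c)
      ≤ q ^ (-a * y ^ 2 + b * y + c) *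
          ∑ r ∈ Finset.Icc ⌈t⌉ ⌊u⌋, (q ^ a) ^ (-((r : ℝ) - y) ^ 2) := by
        rw [Finset.mul_sum]
        exact Finset.sum_le_sum hterm
    _ ≤ q ^ (-a * y ^ 2 + b * y + c) * Cfun (q ^ a) := by
        gcongr
        exact sum_rpow_neg_sq_sub_le_Cfun (one_lt_rpow hq ha) _ y
    _ = Cfun (q ^ a) * q ^ (-a * y ^ 2 + b * y + c) := mul_comm _ _

/-- **Lemma (theta-function bound for quadratic sums).**
For real `q > 1`, `f(x) = -a x² + b x + c` with `a > 0`, and `t ≤ u`, the sum of `q^{f(r)}`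
over the integers `r ∈ [t, u]` is at most `C(q^a)·q^{f(y)}`, where `y` is any point of
`[t, u]` at which `f` attains its maximum on `[t, u]`. -/
theorem quadratic_sum_le_theta_bound (q a b c t u y : ℝ) (hq : 1 < q) (ha : 0 < a)
    (htu : t ≤ u) (hy : y ∈ Set.Icc t u)
    (hmax : ∀ z ∈ Set.Icc t u, -a * z ^ 2 + b * z + c ≤ -a * y ^ 2 + b * y + c) :
    ∑ r ∈ Finset.Icc ⌈t⌉ ⌊u⌋, q ^ (-a * (r : ℝ) ^ 2 + b * (r : ℝ) + c) ≤
      Cfun (q ^ a) * q ^ (-a * y ^ 2 + b * y + c) :=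
  quadratic_sum_le_theta_bound_general q a b c t u y hq ha hy hmax
end

section
/- Let q ≥ 2 be an integer and n ≥ 1, 0 ≤ k ≤ n integers. Then: (i) the Gaussian coefficient satisfies [n choose k]_q ≤ D(q) q^{k(n−k)}; and (ii) the Galois number 𝒢_n(q) = ∑_{k=0}^{n} [n choose k]_q satisfies D(q) q^{n²/4 − 1/4} (2 − (9/2) q^{(1−n)/2}) ≤ 𝒢_n(q) ≤ C(q) D(q) q^{n²/4}. -/
open Finset Real Filter Topology

namespace WilfAux

lemma weier (s : Finset ℕ) (a : ℕ → ℝ) (h0 : ∀ j, 0 ≤ a j) (h1 : ∀ j, a j ≤ 1) :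
    1 - ∑ j ∈ s, a j ≤ ∏ j ∈ s, (1 - a j) := by
  classical
  induction s using Finset.cons_induction with
  | empty => simp
  | cons i s his ih =>
    rw [Finset.prod_cons, Finset.sum_cons]
    have hp : 0 ≤ ∏ j ∈ s, (1 - a j) := Finset.prod_nonneg fun j _ => by linarith [h1 j]
    nlinarith [h0 i, h1 i, Finset.sum_nonneg (fun j (_ : j ∈ s) => h0 j)]

lemma one_le_prodR (s : Finset ℕ) (f : ℕ → ℝ) (h : ∀ j, 1 ≤ f j) : 1 ≤ ∏ j ∈ s, f j := by
  calc (1:ℝ) = ∏ j ∈ s, 1 := by simp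
  _ ≤ ∏ j ∈ s, f j := Finset.prod_le_prod (by simp) (fun j _ => h j)

noncomputable def Pden (u : ℝ) (k : ℕ) : ℝ := ∏ j ∈ Finset.range k, (1 - u^(j+1))⁻¹
noncomputable def DD (u : ℝ) : ℝ := ∏' j : ℕ, (1 - u^(j+1))⁻¹

section U
variable {u : ℝ} (hu0 : 0 < u) (hu2 : u ≤ 1/2)
include hu0 hu2

lemma upow_le_half (m : ℕ) : u ^ (m+1) ≤ 1/2 := by
  calc u^(m+1) ≤ u^1 := pow_le_pow_of_le_one hu0.le (by linarith) (by omega)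
  _ ≤ 1/2 := by simpa using hu2

lemma geom_tail (m c : ℕ) : ∑ j ∈ Finset.range m, u ^ (c + j + 1) ≤ u ^ c := by
  have h1 : u < 1 := by linarith
  have : ∑ j ∈ Finset.range m, u ^ (c + j + 1) = u^(c+1) * ∑ j ∈ Finset.range m, u ^ j := by
    rw [Finset.mul_sum]
    exact Finset.sum_congr rfl fun j _ => by rw [← pow_add]; congr 1; omega
  rw [this]
  have hg : ∑ j ∈ Finset.range m, u ^ j ≤ (1-u)⁻¹ := by
    have := Summable.sum_le_tsum (Finset.range m) (fun i _ => pow_nonneg hu0.le i)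
      (summable_geometric_of_lt_one hu0.le h1)
    rwa [tsum_geometric_of_lt_one hu0.le h1] at this
  have h2 : (1-u)⁻¹ ≤ 2 := by
    rw [inv_le_comm₀ (by linarith) (by norm_num)]; linarith
  calc u^(c+1) * ∑ j ∈ Finset.range m, u ^ j ≤ u^(c+1) * 2 :=
        mul_le_mul_of_nonneg_left (hg.trans h2) (pow_nonneg hu0.le _)
  _ = u^c * (2*u) := by ring
  _ ≤ u^c * 1 := mul_le_mul_of_nonneg_left (by linarith) (pow_nonneg hu0.le _)
  _ = u^c := by ring

lemma summable_logD : Summable (fun j : ℕ => Real.log ((1 - u ^ (j+1))⁻¹)) := by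
  have h1 : ∀ j : ℕ, u ^ (j+1) ≤ 1/2 := upow_le_half hu0 hu2
  have hp : ∀ j : ℕ, (0:ℝ) < 1 - u ^ (j+1) := fun j => by linarith [h1 j]
  have hsg : Summable (fun j : ℕ => 2 * u ^ (j+1)) :=
    ((summable_geometric_of_lt_one hu0.le (by linarith)).mul_left (2*u)).congr
      (fun j => by rw [pow_succ]; ring)
  refine Summable.of_nonneg_of_le (fun j => ?_) (fun j => ?_) hsg
  · rw [Real.log_inv]
    simp only [neg_nonneg]
    exact Real.log_nonpos (hp j).le (by nlinarith [pow_nonneg hu0.le (j+1)])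
  · rw [Real.log_inv, neg_le]
    have hinv : (1 - u^(j+1))⁻¹ ≤ 1 + 2 * u^(j+1) := by
      rw [inv_le_iff_one_le_mul₀ (hp j)]
      nlinarith [pow_nonneg hu0.le (j+1), h1 j]
    nlinarith [Real.one_sub_inv_le_log_of_pos (hp j), hinv]

lemma multD : Multipliable (fun j : ℕ => (1 - u ^ (j+1))⁻¹) := by
  have hp : ∀ j : ℕ, (0:ℝ) < 1 - u ^ (j+1) := fun j => by linarith [upow_le_half hu0 hu2 j]
  have he : (fun j : ℕ => (1 - u ^ (j+1))⁻¹) =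
      fun j => Real.exp (Real.log ((1 - u ^ (j+1))⁻¹)) :=
    funext fun j => (Real.exp_log (inv_pos.2 (hp j))).symm
  rw [he]
  exact ⟨_, (summable_logD hu0 hu2).hasSum.rexp⟩

lemma tendstoD : Tendsto (fun m => Pden u m) atTop (𝓝 (DD u)) :=
  (multD hu0 hu2).hasProd.tendsto_prod_nat

lemma fac_pos (j : ℕ) : (0:ℝ) < 1 - u^(j+1) := by linarith [upow_le_half hu0 hu2 j]

lemma one_le_fac (j : ℕ) : (1:ℝ) ≤ (1 - u^(j+1))⁻¹ := by
  rw [le_inv_comm₀ one_pos (fac_pos hu0 hu2 j)]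
  simp only [inv_one]
  nlinarith [pow_nonneg hu0.le (j+1)]

lemma Pden_pos (k : ℕ) : 0 < Pden u k :=
  Finset.prod_pos fun j _ => inv_pos.2 (fac_pos hu0 hu2 j)

lemma Pden_split (k m : ℕ) (hm : k ≤ m) :
    Pden u m = Pden u k * ∏ j ∈ Finset.range (m-k), (1 - u^(k+j+1))⁻¹ := by
  have h := Finset.prod_range_add (fun j => (1 - u^(j+1))⁻¹) k (m-k)
  rw [Nat.add_sub_cancel' hm] at h
  simpa [Pden] using h

lemma Pden_le_D (k : ℕ) : Pden u k ≤ DD u := by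
  refine ge_of_tendsto (tendstoD hu0 hu2) ?_
  filter_upwards [eventually_ge_atTop k] with m hm
  rw [Pden_split hu0 hu2 k m hm]
  nlinarith [Pden_pos hu0 hu2 k,
    one_le_prodR (Finset.range (m-k)) (fun j => (1 - u^(k+j+1))⁻¹)
      (fun j => one_le_fac hu0 hu2 (k+j))]

lemma one_le_D : 1 ≤ DD u := by
  have := Pden_le_D hu0 hu2 0
  simpa [Pden] using this

lemma D_le_tail (k : ℕ) (hk : 1 ≤ k) : DD u ≤ Pden u k * (1 - u^k)⁻¹ := by
  have huk : u^k ≤ 1/2 := by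
    obtain ⟨m, rfl⟩ : ∃ m, k = m + 1 := ⟨k-1, by omega⟩
    exact upow_le_half hu0 hu2 m
  have hukpos : 0 < 1 - u^k := by linarith
  refine le_of_tendsto (tendstoD hu0 hu2) ?_
  filter_upwards [eventually_ge_atTop k] with m hm
  rw [Pden_split hu0 hu2 k m hm]
  have hprod_ge : 1 - u^k ≤ ∏ j ∈ Finset.range (m-k), (1 - u^(k+j+1)) := by
    have hw := weier (Finset.range (m-k)) (fun j => u^(k+j+1))
      (fun j => pow_nonneg hu0.le _)
      (fun j => (upow_le_half hu0 hu2 (k+j)).trans (by norm_num))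
    refine le_trans ?_ hw
    have := geom_tail hu0 hu2 (m-k) k
    linarith
  have hinvle : ∏ j ∈ Finset.range (m-k), (1 - u^(k+j+1))⁻¹ ≤ (1 - u^k)⁻¹ := by
    rw [show (∏ j ∈ Finset.range (m-k), (1 - u^(k+j+1))⁻¹) = (∏ j ∈ Finset.range (m-k), (1 - u^(k+j+1)))⁻¹ from by rw [Finset.prod_inv_distrib]]
    exact inv_anti₀ hukpos hprod_ge
  exact mul_le_mul_of_nonneg_left hinvle (Pden_pos hu0 hu2 k).le

end U

section Q
variable {Q : ℝ} (hQ : 2 ≤ Q)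
include hQ

lemma hQ0 : (0:ℝ) < Q := by linarith
lemma hQ1 : (1:ℝ) < Q := by linarith
lemma hu0' : (0:ℝ) < Q⁻¹ := inv_pos.2 (hQ0 hQ)
lemma hu2' : Q⁻¹ ≤ 1/2 := by
  rw [inv_le_comm₀ (hQ0 hQ) (by norm_num)]; linarith

lemma gauss_nonneg (n k : ℕ) (hk : k ≤ n) : 0 ≤ gaussR Q n k := by
  refine Finset.prod_nonneg fun i hi => ?_
  have hik : i < k := Finset.mem_range.1 hi
  have h1 : Q^i < Q^k := pow_lt_pow_right₀ (hQ1 hQ) hik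
  have h2 : Q^i ≤ Q^n := pow_le_pow_right₀ (by linarith : 1 ≤ Q) (by omega)
  exact div_nonneg (by linarith) (by linarith)

lemma gauss_eq (n k : ℕ) (hk : k ≤ n) :
    gaussR Q n k = Q^(k*(n-k)) *
      (∏ j ∈ Finset.range k, (1 - (Q⁻¹)^(n-k+j+1))) * Pden Q⁻¹ k := by
  have hQ0' := hQ0 hQ
  have hQne : Q ≠ 0 := ne_of_gt hQ0'
  have key : ∀ a b : ℕ, a ≤ b → Q^b * (Q⁻¹)^(b-a) = Q^a := by
    intro a b h
    rw [inv_pow, mul_inv_eq_iff_eq_mul₀ (pow_ne_zero _ hQne), ← pow_add]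
    congr 1; omega
  have hfac : ∀ i ∈ Finset.range k,
      (Q ^ n - Q ^ i) / (Q ^ k - Q ^ i)
        = Q^(n-k) * ((1 - (Q⁻¹)^(n-i)) * (1 - (Q⁻¹)^(k-i))⁻¹) := by
    intro i hi
    have hik : i < k := Finset.mem_range.1 hi
    have hin : i < n := lt_of_lt_of_le hik hk
    have e1 : Q ^ n - Q ^ i = Q^n * (1 - (Q⁻¹)^(n-i)) := by
      rw [mul_sub, mul_one, key i n hin.le]
    have e2 : Q ^ k - Q ^ i = Q^k * (1 - (Q⁻¹)^(k-i)) := by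
      rw [mul_sub, mul_one, key i k hik.le]
    rw [e1, e2, mul_div_mul_comm, ← div_eq_mul_inv, pow_sub₀ Q hQne hk, div_eq_mul_inv]
  calc gaussR Q n k
      = ∏ i ∈ Finset.range k, (Q^(n-k) * ((1 - (Q⁻¹)^(n-i)) * (1 - (Q⁻¹)^(k-i))⁻¹)) :=
        Finset.prod_congr rfl hfac
    _ = (∏ _i ∈ Finset.range k, Q^(n-k)) *
        ((∏ i ∈ Finset.range k, (1 - (Q⁻¹)^(n-i))) *
         (∏ i ∈ Finset.range k, (1 - (Q⁻¹)^(k-i))⁻¹)) := by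
        rw [← Finset.prod_mul_distrib, ← Finset.prod_mul_distrib]
    _ = Q^(k*(n-k)) *
        (∏ j ∈ Finset.range k, (1 - (Q⁻¹)^(n-k+j+1))) * Pden Q⁻¹ k := by
        rw [Finset.prod_const]
        have c1 : (Q^(n-k))^k = Q^(k*(n-k)) := by rw [← pow_mul, Nat.mul_comm]
        have c2 : ∏ i ∈ Finset.range k, (1 - (Q⁻¹)^(n-i))
            = ∏ j ∈ Finset.range k, (1 - (Q⁻¹)^(n-k+j+1)) := by
          rw [← Finset.prod_range_reflect (fun j => 1 - (Q⁻¹)^(n-k+j+1)) k]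
          refine Finset.prod_congr rfl fun i hi => ?_
          have : i < k := Finset.mem_range.1 hi
          congr 2
          omega
        have c3 : ∏ i ∈ Finset.range k, (1 - (Q⁻¹)^(k-i))⁻¹ = Pden Q⁻¹ k := by
          rw [Pden, ← Finset.prod_range_reflect (fun j => (1 - (Q⁻¹)^(j+1))⁻¹) k]
          refine Finset.prod_congr rfl fun i hi => ?_
          have : i < k := Finset.mem_range.1 hi
          congr 3
          omega
        rw [Finset.card_range, c1, c2, c3]
        ring

lemma gauss_le (n k : ℕ) (hk : k ≤ n) : gaussR Q n k ≤ DD Q⁻¹ * Q^(k*(n-k)) := by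
  have hu0 := hu0' hQ; have hu2 := hu2' hQ
  rw [gauss_eq hQ n k hk]
  have hPnum_le : (∏ j ∈ Finset.range k, (1 - (Q⁻¹)^(n-k+j+1))) ≤ 1 :=
    Finset.prod_le_one (fun j _ => (fac_pos hu0 hu2 (n-k+j)).le)
      (fun j _ => by nlinarith [pow_nonneg hu0.le (n-k+j+1)])
  have hPnum_nn : 0 ≤ ∏ j ∈ Finset.range k, (1 - (Q⁻¹)^(n-k+j+1)) :=
    Finset.prod_nonneg (fun j _ => (fac_pos hu0 hu2 (n-k+j)).le)
  have hPden := Pden_le_D hu0 hu2 k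
  have hPden_pos := Pden_pos hu0 hu2 k
  have hQe : (0:ℝ) < Q^(k*(n-k)) := pow_pos (hQ0 hQ) _
  calc Q^(k*(n-k)) * (∏ j ∈ Finset.range k, (1 - (Q⁻¹)^(n-k+j+1))) * Pden Q⁻¹ k
      ≤ Q^(k*(n-k)) * 1 * Pden Q⁻¹ k :=
        mul_le_mul_of_nonneg_right (mul_le_mul_of_nonneg_left hPnum_le hQe.le) hPden_pos.le
  _ = Q^(k*(n-k)) * Pden Q⁻¹ k := by ring
  _ ≤ Q^(k*(n-k)) * DD Q⁻¹ := mul_le_mul_of_nonneg_left hPden hQe.le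
  _ = DD Q⁻¹ * Q^(k*(n-k)) := mul_comm _ _

lemma gauss_ge (n k : ℕ) (hk : k ≤ n) :
    DD Q⁻¹ * Q^(k*(n-k)) * (1 - (Q⁻¹)^k - (Q⁻¹)^(n-k)) ≤ gaussR Q n k := by
  have hu0 := hu0' hQ; have hu2 := hu2' hQ
  have hDD : 1 ≤ DD Q⁻¹ := one_le_D hu0 hu2
  have hQe : (0:ℝ) < Q^(k*(n-k)) := pow_pos (hQ0 hQ) _
  rcases eq_or_ne k 0 with rfl | hk0
  · have : (1:ℝ) - (Q⁻¹)^(0:ℕ) - (Q⁻¹)^(n-0) ≤ 0 := by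
      simp only [pow_zero]
      nlinarith [pow_nonneg hu0.le (n-0)]
    have hDQ : (0:ℝ) ≤ DD Q⁻¹ * Q^(0*(n-0)) := mul_nonneg (by linarith) hQe.le
    nlinarith [gauss_nonneg hQ n 0 hk, mul_nonpos_of_nonneg_of_nonpos hDQ this]
  rcases eq_or_ne k n with rfl | hkn
  · have : (1:ℝ) - (Q⁻¹)^k - (Q⁻¹)^(k-k) ≤ 0 := by
      simp only [Nat.sub_self, pow_zero]
      nlinarith [pow_nonneg hu0.le k]
    have hDQ : (0:ℝ) ≤ DD Q⁻¹ * Q^(k*(k-k)) := mul_nonneg (by linarith) hQe.le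
    nlinarith [gauss_nonneg hQ k k le_rfl, mul_nonpos_of_nonneg_of_nonpos hDQ this]
  -- main case 1 ≤ k ≤ n-1
  have hk1 : 1 ≤ k := Nat.one_le_iff_ne_zero.2 hk0
  have hnk1 : 1 ≤ n - k := by omega
  rw [gauss_eq hQ n k hk]
  set a := (Q⁻¹)^k with ha
  set b := (Q⁻¹)^(n-k) with hb
  have ha2 : a ≤ 1/2 := by
    rw [ha, show k = (k-1)+1 by omega]; exact upow_le_half hu0 hu2 _
  have hb2 : b ≤ 1/2 := by
    rw [hb, show n-k = (n-k-1)+1 by omega]; exact upow_le_half hu0 hu2 _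
  have ha0 : 0 ≤ a := pow_nonneg hu0.le _
  have hb0 : 0 ≤ b := pow_nonneg hu0.le _
  have hPnum_ge : 1 - b ≤ ∏ j ∈ Finset.range k, (1 - (Q⁻¹)^(n-k+j+1)) := by
    have hw := weier (Finset.range k) (fun j => (Q⁻¹)^(n-k+j+1))
      (fun j => pow_nonneg hu0.le _)
      (fun j => (upow_le_half hu0 hu2 (n-k+j)).trans (by norm_num))
    have hg := geom_tail hu0 hu2 k (n-k)
    refine le_trans ?_ hw
    rw [hb]
    linarith
  have hPden_ge : DD Q⁻¹ * (1 - a) ≤ Pden Q⁻¹ k := by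
    have htail := D_le_tail hu0 hu2 k hk1
    have hapos : 0 < 1 - a := by linarith
    rw [← ha] at htail
    calc DD Q⁻¹ * (1-a) ≤ (Pden Q⁻¹ k * (1-a)⁻¹) * (1-a) :=
          mul_le_mul_of_nonneg_right htail hapos.le
    _ = Pden Q⁻¹ k := by field_simp
  have hPden_pos := Pden_pos hu0 hu2 k
  have hPnum_nn : (0:ℝ) ≤ 1 - b := by linarith
  have step1 : (1-b) * (DD Q⁻¹ * (1-a)) ≤
      (∏ j ∈ Finset.range k, (1 - (Q⁻¹)^(n-k+j+1))) * Pden Q⁻¹ k := by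
    have h1 : (1-b) * (DD Q⁻¹ * (1-a)) ≤ (1-b) * Pden Q⁻¹ k :=
      mul_le_mul_of_nonneg_left hPden_ge hPnum_nn
    have h2 : (1-b) * Pden Q⁻¹ k ≤
        (∏ j ∈ Finset.range k, (1 - (Q⁻¹)^(n-k+j+1))) * Pden Q⁻¹ k :=
      mul_le_mul_of_nonneg_right hPnum_ge hPden_pos.le
    linarith
  have hDD0 : (0:ℝ) ≤ DD Q⁻¹ := by linarith
  nlinarith [mul_le_mul_of_nonneg_left step1 hQe.le, mul_nonneg (mul_nonneg ha0 hb0) hDD0,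
    mul_pos hQe (mul_pos (mul_pos (by linarith : (0:ℝ) < 1-b) (by linarith : (0:ℝ) < DD Q⁻¹)) (by linarith : (0:ℝ) < 1-a))]

lemma Dfun_eq : Dfun Q = DD Q⁻¹ := by
  unfold Dfun DD
  congr 1
  funext j
  congr 2
  rw [show -((j:ℝ)+1) = -(((j+1:ℕ)):ℝ) by push_cast; ring,
    Real.rpow_neg (hQ0 hQ).le, Real.rpow_natCast, inv_pow]

lemma crw (r : ℤ) : Q ^ (-((r : ℝ) ^ 2)) = (Q⁻¹)^(r.natAbs^2) := by
  have h1 : ((r.natAbs^2 : ℕ) : ℝ) = (r:ℝ)^2 := by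
    push_cast [Nat.cast_natAbs]
    rw [sq_abs]
  rw [← h1, Real.rpow_neg (hQ0 hQ).le, Real.rpow_natCast, inv_pow]

lemma summable_sq : Summable (fun n : ℕ => (Q⁻¹)^(n^2)) := by
  have hu0 := hu0' hQ
  have hu1 : Q⁻¹ < 1 := by
    rw [inv_lt_one_iff₀]; right; linarith
  refine Summable.of_nonneg_of_le (fun n => by positivity) (fun n => ?_)
    (summable_geometric_of_lt_one hu0.le hu1)
  exact pow_le_pow_of_le_one hu0.le hu1.le (Nat.le_self_pow (by norm_num) n)

lemma summable_C : Summable (fun r : ℤ => Q ^ (-((r : ℝ) ^ 2))) := by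
  have : (fun r : ℤ => Q ^ (-((r : ℝ) ^ 2))) = fun r : ℤ => (Q⁻¹)^(r.natAbs^2) :=
    funext (crw hQ)
  rw [this]
  refine Summable.of_nat_of_neg ?_ ?_
  · exact (summable_sq hQ).congr (fun n => by simp)
  · exact (summable_sq hQ).congr (fun n => by simp)

lemma Cfun_ge : 1 + 2*(Q⁻¹ + (Q⁻¹)^4 + (Q⁻¹)^9 + (Q⁻¹)^16 + (Q⁻¹)^25) ≤ Cfun Q := by
  have hs := Summable.sum_le_tsum ({0,1,-1,2,-2,3,-3,4,-4,5,-5} : Finset ℤ)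
    (fun r _ => by
      rw [crw hQ r]; positivity)
    (summable_C hQ)
  refine le_trans ?_ hs
  rw [show ∑ r ∈ ({0,1,-1,2,-2,3,-3,4,-4,5,-5} : Finset ℤ), Q ^ (-((r : ℝ) ^ 2)) =
    ∑ r ∈ ({0,1,-1,2,-2,3,-3,4,-4,5,-5} : Finset ℤ), (Q⁻¹)^(r.natAbs^2) from
    Finset.sum_congr rfl (fun r _ => crw hQ r)]
  norm_num [Finset.sum_insert, Finset.mem_insert]
  ring_nf
  norm_num

lemma sumA (M : ℕ) : ∑ j ∈ Finset.range M, (Q⁻¹)^(j*(j+1)) ≤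
    1 + (Q⁻¹)^2 + (Q⁻¹)^6 + (Q⁻¹)^12 + (Q⁻¹)^20 + 2*(Q⁻¹)^30 := by
  have hu0 := hu0' hQ
  have hu2 := hu2' hQ
  have hu1 : Q⁻¹ ≤ 1 := by linarith
  set u : ℝ := Q⁻¹ with hudef
  have h5 : ∑ j ∈ Finset.range 5, u^(j*(j+1)) = 1 + u^2 + u^6 + u^12 + u^20 := by
    norm_num [Finset.sum_range_succ]
  rcases le_or_gt M 5 with hM | hM
  · have hsub : Finset.range M ⊆ Finset.range 5 := Finset.range_subset_range.2 hM
    have hmono : ∑ j ∈ Finset.range M, u^(j*(j+1)) ≤ ∑ j ∈ Finset.range 5, u^(j*(j+1)) :=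
      Finset.sum_le_sum_of_subset_of_nonneg hsub (fun j _ _ => by positivity)
    rw [h5] at hmono
    nlinarith [pow_nonneg hu0.le 30]
  · obtain ⟨d, rfl⟩ : ∃ d, M = 5 + d := ⟨M-5, by omega⟩
    rw [Finset.sum_range_add, h5]
    have htail : ∑ i ∈ Finset.range d, u^((5+i)*((5+i)+1)) ≤ 2*u^30 := by
      have hle : ∀ i ∈ Finset.range d, u^((5+i)*((5+i)+1)) ≤ u^30 * (u^11)^i := by
        intro i _
        rw [← pow_mul, ← pow_add]
        exact pow_le_pow_of_le_one hu0.le hu1 (by nlinarith [sq_nonneg i])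
      calc ∑ i ∈ Finset.range d, u^((5+i)*((5+i)+1))
          ≤ ∑ i ∈ Finset.range d, u^30 * (u^11)^i := Finset.sum_le_sum hle
      _ = u^30 * ∑ i ∈ Finset.range d, (u^11)^i := by rw [Finset.mul_sum]
      _ ≤ u^30 * 2 := by
          refine mul_le_mul_of_nonneg_left ?_ (by positivity)
          have hr : (0:ℝ) ≤ u^11 := by positivity
          have hr1 : u^11 < 1 := by
            calc u^11 ≤ u^1 := pow_le_pow_of_le_one hu0.le hu1 (by norm_num)
            _ < 1 := by rw [pow_one]; linarith
          have hts := Summable.sum_le_tsum (Finset.range d) (fun i _ => pow_nonneg hr i)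
            (summable_geometric_of_lt_one hr hr1)
          rw [tsum_geometric_of_lt_one hr hr1] at hts
          have h2 : (1-u^11)⁻¹ ≤ 2 := by
            rw [inv_le_comm₀ (by nlinarith) (by norm_num)]
            have h11 : u^11 ≤ u^1 := pow_le_pow_of_le_one hu0.le hu1 (by norm_num)
            rw [pow_one] at h11
            linarith
          linarith
      _ = 2*u^30 := by ring
    have : ∑ i ∈ Finset.range d, u^((5+i)*(5+i+1)) ≤ 2*u^30 := by
      refine le_trans (le_of_eq ?_) htail
      exact Finset.sum_congr rfl fun i _ => by ring_nf
    linarith [this]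

end Q

lemma key_num (q : ℕ) (hq : 2 ≤ q) :
    2 * ((q:ℝ) ^ (-(1/4:ℝ))) *
      (1 + ((q:ℝ)⁻¹)^2 + ((q:ℝ)⁻¹)^6 + ((q:ℝ)⁻¹)^12 + ((q:ℝ)⁻¹)^20 + 2*((q:ℝ)⁻¹)^30) ≤
    1 + 2*((q:ℝ)⁻¹ + ((q:ℝ)⁻¹)^4 + ((q:ℝ)⁻¹)^9 + ((q:ℝ)⁻¹)^16 + ((q:ℝ)⁻¹)^25) := by
  have hQ2 : (2:ℝ) ≤ (q:ℝ) := by exact_mod_cast hq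
  have hQ0 : (0:ℝ) < (q:ℝ) := by linarith
  set u : ℝ := (q:ℝ)⁻¹ with hu
  have hu0 : 0 < u := inv_pos.2 hQ0
  have hu2 : u ≤ 1/2 := by rw [hu, inv_le_comm₀ hQ0 (by norm_num)]; linarith
  set x : ℝ := (q:ℝ) ^ (-(1/4:ℝ)) with hxdef
  have hx0 : 0 < x := rpow_pos_of_pos hQ0 _
  have hx4 : x^(4:ℕ) = u := by
    rw [hxdef, ← Real.rpow_natCast ((q:ℝ) ^ (-(1/4:ℝ))) 4, ← Real.rpow_mul hQ0.le]
    norm_num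
    rw [Real.rpow_neg_one]
  set A : ℝ := 1 + u^2 + u^6 + u^12 + u^20 + 2*u^30 with hA
  set R : ℝ := 1 + 2*(u + u^4 + u^9 + u^16 + u^25) with hR
  have hA0 : 0 ≤ A := by positivity
  have hR0 : 0 ≤ R := by positivity
  refine le_of_pow_le_pow_left₀ (n := 4) (by norm_num) hR0 ?_
  have hlhs : (2 * x * A)^4 = 16 * u * A^4 := by
    rw [mul_pow, mul_pow, hx4]; ring
  rw [hlhs]
  rcases le_or_gt 16 q with hbig | hsmall
  · have hu16 : u ≤ 1/16 := by
      have : (16:ℝ) ≤ (q:ℝ) := by exact_mod_cast hbig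
      rw [hu, inv_le_comm₀ hQ0 (by norm_num)]; linarith
    have hu1 : u ≤ 1 := by linarith
    have hp : ∀ m n : ℕ, m ≤ n → u^n ≤ u^m := fun m n h => pow_le_pow_of_le_one hu0.le hu1 h
    have hAR : A ≤ R := by
      have h6 := hp 2 6 (by norm_num)
      have h12 := hp 2 12 (by norm_num)
      have h20 := hp 2 20 (by norm_num)
      have h30 := hp 2 30 (by norm_num)
      have hq4 : 0 ≤ u^4 := by positivity
      have hq9 : 0 ≤ u^9 := by positivity
      have hq16 : 0 ≤ u^16 := by positivity
      have hq25 : 0 ≤ u^25 := by positivity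
      rw [hA, hR]
      nlinarith [sq_nonneg u]
    have h16u : 16 * u ≤ 1 := by nlinarith
    calc 16 * u * A^4 ≤ 1 * A^4 := by
          apply mul_le_mul_of_nonneg_right h16u (by positivity)
    _ = A^4 := by ring
    _ ≤ R^4 := pow_le_pow_left₀ hA0 hAR 4
  · interval_cases q <;> norm_num [hA, hR, hu]

section Theta
variable {Q : ℝ} (hQ : 2 ≤ Q)
include hQ

lemma even_theta (M : ℕ) :
    ∑ k ∈ Finset.range (2*M+1), Q ^ (-((((2*M:ℕ):ℝ) - 2*k)^2/4)) ≤ Cfun Q := by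
  have hterm : ∀ k ∈ Finset.range (2*M+1),
      Q ^ (-((((2*M:ℕ):ℝ) - 2*k)^2/4)) = Q ^ (-(((((M:ℤ) - k : ℤ)):ℝ)^2)) := by
    intro k _
    congr 1
    push_cast
    ring
  rw [Finset.sum_congr rfl hterm]
  have hinj : ∀ a ∈ Finset.range (2*M+1), ∀ b ∈ Finset.range (2*M+1),
      ((M:ℤ) - a) = ((M:ℤ) - b) → a = b := by
    intro a _ b _ h
    omega
  have himg := Finset.sum_image (f := fun r : ℤ => Q ^ (-((r:ℝ)^2)))
    (g := fun k : ℕ => (M:ℤ) - k) (s := Finset.range (2*M+1)) hinj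
  rw [← himg]
  exact Summable.sum_le_tsum _ (fun r _ => Real.rpow_nonneg (by linarith) _) (summable_C hQ)

end Theta

lemma odd_theta (q : ℕ) (hq : 2 ≤ q) (M : ℕ) :
    ∑ k ∈ Finset.range (2*M+2), (q:ℝ) ^ (-((((2*M+1:ℕ):ℝ) - 2*k)^2/4)) ≤ Cfun (q:ℝ) := by
  have hQ : (2:ℝ) ≤ (q:ℝ) := by exact_mod_cast hq
  have hQ0 : (0:ℝ) < (q:ℝ) := by linarith
  set Q : ℝ := (q:ℝ) with hQdef
  set v : ℕ → ℝ := fun j => Q ^ (-(1/4:ℝ)) * (Q⁻¹)^(j*(j+1)) with hv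
  have hval : ∀ j : ℕ, Q ^ (-(((2*(j:ℝ)+1)^2/4))) = v j := by
    intro j
    have e1 : -((2*(j:ℝ)+1)^2/4) = -(((j*(j+1) : ℕ)):ℝ) + (-(1/4:ℝ)) := by
      push_cast
      ring
    rw [e1, Real.rpow_add hQ0, Real.rpow_neg hQ0.le, Real.rpow_natCast]
    simp only [hv]
    rw [inv_pow]
    ring
  have hsplit : ∑ k ∈ Finset.range (2*M+2), Q ^ (-((((2*M+1:ℕ):ℝ) - 2*k)^2/4)) =
      2 * ∑ j ∈ Finset.range (M+1), v j := by
    rw [show 2*M+2 = (M+1)+(M+1) by omega, Finset.sum_range_add]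
    have h1 : ∑ k ∈ Finset.range (M+1), Q ^ (-((((2*M+1:ℕ):ℝ) - 2*k)^2/4)) =
        ∑ j ∈ Finset.range (M+1), v j := by
      rw [← Finset.sum_range_reflect]
      refine Finset.sum_congr rfl fun j hj => ?_
      have hjM : j < M+1 := Finset.mem_range.1 hj
      rw [← hval j]
      congr 1
      have hc : ((M+1-1-j:ℕ):ℝ) = (M:ℝ) - j := by
        rw [show M+1-1-j = M - j by omega, Nat.cast_sub (by omega : j ≤ M)]
      rw [hc]
      push_cast
      ring
    have h2 : ∑ i ∈ Finset.range (M+1), Q ^ (-((((2*M+1:ℕ):ℝ) - 2*(((M+1+i:ℕ)):ℝ))^2/4)) =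
        ∑ j ∈ Finset.range (M+1), v j := by
      refine Finset.sum_congr rfl fun i _ => ?_
      rw [← hval i]
      congr 1
      push_cast
      ring
    rw [h1, h2]
    ring
  rw [hsplit]
  have hsum := sumA hQ (M+1)
  have hx0 : (0:ℝ) < Q ^ (-(1/4:ℝ)) := Real.rpow_pos_of_pos hQ0 _
  have hfold : ∑ j ∈ Finset.range (M+1), v j =
      Q ^ (-(1/4:ℝ)) * ∑ j ∈ Finset.range (M+1), (Q⁻¹)^(j*(j+1)) := by
    rw [hv, Finset.mul_sum]
  calc 2 * ∑ j ∈ Finset.range (M+1), v j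
      = 2 * (Q ^ (-(1/4:ℝ)) * ∑ j ∈ Finset.range (M+1), (Q⁻¹)^(j*(j+1))) := by rw [hfold]
  _ ≤ 2 * (Q ^ (-(1/4:ℝ)) *
        (1 + (Q⁻¹)^2 + (Q⁻¹)^6 + (Q⁻¹)^12 + (Q⁻¹)^20 + 2*(Q⁻¹)^30)) := by
      have := mul_le_mul_of_nonneg_left hsum hx0.le
      linarith
  _ = 2 * (Q ^ (-(1/4:ℝ))) *
        (1 + (Q⁻¹)^2 + (Q⁻¹)^6 + (Q⁻¹)^12 + (Q⁻¹)^20 + 2*(Q⁻¹)^30) := by ring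
  _ ≤ 1 + 2*(Q⁻¹ + (Q⁻¹)^4 + (Q⁻¹)^9 + (Q⁻¹)^16 + (Q⁻¹)^25) := key_num q hq
  _ ≤ Cfun Q := Cfun_ge hQ

lemma even_core {x u ε a b : ℝ} (hx0 : 0 < x) (hu0 : 0 < u) (hu2 : u ≤ 1/2)
    (hxu : x^4 * u = 1) (hx1 : 1 ≤ x) (hε : 0 ≤ ε)
    (ha : u * a = ε) (hb : u * b = ε * u^2) :
    x⁻¹ * (2 - (9/2)*x^2*ε) ≤ (1 - 2*ε) + 2*u*(1 - a - b) := by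
  have e : (x + 2*x*u - 2)*x^3 = x^4 - 2*x^3 + 2 := by linear_combination 2*hxu
  have cert : 0 ≤ x^4 - 2*x^3 + 2 := by nlinarith [sq_nonneg (x^2-x-1), sq_nonneg (x-1)]
  have step1 : 2 ≤ x + 2*x*u := by nlinarith [e, cert, pow_pos hx0 3]
  have step2 : 4*x + 2*x*u^2 ≤ (9/2)*x^2 := by nlinarith
  have hprod : 0 ≤ ε * ((9/2)*x^2 - (4*x + 2*x*u^2)) :=
    mul_nonneg hε (by linarith)
  rw [inv_mul_eq_div, div_le_iff₀ hx0]
  nlinarith [hprod, step1, ha, hb, hε]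

end WilfAux

open WilfAux in
/-- **Lemma (Wilf's estimates for Gaussian coefficients and Galois numbers).**
For an integer `q ≥ 2` and `0 ≤ k ≤ n`: (i) `[n choose k]_q ≤ D(q) q^{k(n-k)}`; and
(ii) `D(q) q^{n²/4 - 1/4}(2 - (9/2)q^{(1-n)/2}) ≤ 𝒢_n(q) ≤ C(q) D(q) q^{n²/4}`. -/
theorem gaussian_and_galois_estimates (q n k : ℕ) (hq : 2 ≤ q) (hn : 1 ≤ n) (hk : k ≤ n) :
    gaussR q n k ≤ Dfun q * (q : ℝ) ^ (k * (n - k)) ∧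
    Dfun q * (q : ℝ) ^ ((n : ℝ) ^ 2 / 4 - 1 / 4) *
        (2 - 9 / 2 * (q : ℝ) ^ ((1 - (n : ℝ)) / 2)) ≤ galoisR q n ∧
    galoisR q n ≤ Cfun q * Dfun q * (q : ℝ) ^ ((n : ℝ) ^ 2 / 4) := by
  have hQ : (2:ℝ) ≤ (q:ℝ) := by exact_mod_cast hq
  have hQ0 : (0:ℝ) < (q:ℝ) := by linarith
  set Q : ℝ := (q:ℝ) with hQdef
  set u : ℝ := Q⁻¹ with hudef
  have hu0 : 0 < u := inv_pos.2 hQ0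
  have hu2 : u ≤ 1/2 := hu2' hQ
  have hQu : Q * u = 1 := mul_inv_cancel₀ (ne_of_gt hQ0)
  have hD : Dfun Q = DD u := Dfun_eq hQ
  have hDD1 : 1 ≤ DD u := one_le_D hu0 hu2
  have hDD0 : 0 ≤ DD u := by linarith
  refine ⟨?_, ?_, ?_⟩
  · rw [hD]
    exact gauss_le hQ n k hk
  · -- lower bound for the Galois number
    rw [hD]
    rcases Nat.even_or_odd n with he | ho
    · -- even case
      obtain ⟨r, hr⟩ := he
      have h2M : n = 2 * r := by omega
      obtain ⟨m, hm⟩ : ∃ m, r = m + 1 := ⟨r - 1, by omega⟩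
      subst hm
      subst h2M
      clear hr
      set x : ℝ := Q ^ ((1/4:ℝ)) with hxdef
      have hx0 : 0 < x := Real.rpow_pos_of_pos hQ0 _
      have hx4 : x^(4:ℕ) = Q := by
        rw [hxdef, ← Real.rpow_natCast (Q ^ ((1/4:ℝ))) 4, ← Real.rpow_mul hQ0.le]
        norm_num
      have hx1 : 1 ≤ x := by
        by_contra hlt
        push_neg at hlt
        have := pow_lt_one₀ hx0.le hlt (by norm_num : (4:ℕ) ≠ 0)
        rw [hx4] at this
        linarith
      have hE1 : Q ^ (((2*(m+1):ℕ):ℝ)^2/4 - 1/4) = Q^((m+1)*(m+1)) * x⁻¹ := by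
        rw [show (((2*(m+1):ℕ):ℝ))^2/4 - 1/4 = (((m+1)*(m+1):ℕ):ℝ) + (-(1/4:ℝ)) by
          push_cast; ring]
        rw [Real.rpow_add hQ0, Real.rpow_natCast, Real.rpow_neg hQ0.le, hxdef]
      have hE2 : Q ^ ((1 - ((2*(m+1):ℕ):ℝ))/2) = x^2 * u^(m+1) := by
        rw [show (1 - ((2*(m+1):ℕ):ℝ))/2 = (1/2:ℝ) + (-(((m+1:ℕ)):ℝ)) by push_cast; ring]
        rw [Real.rpow_add hQ0, Real.rpow_neg hQ0.le, Real.rpow_natCast]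
        congr 1
        · rw [hxdef, ← Real.rpow_natCast (Q ^ ((1/4:ℝ))) 2, ← Real.rpow_mul hQ0.le]
          norm_num
        · rw [hudef, inv_pow]
      set n' : ℕ := 2*(m+1) with hn'
      have hA := gauss_ge hQ n' (m+1) (by omega)
      rw [show n' - (m+1) = m+1 by omega] at hA
      have hB := gauss_ge hQ n' m (by omega)
      rw [show n' - m = m+2 by omega] at hB
      have hC := gauss_ge hQ n' (m+2) (by omega)
      rw [show n' - (m+2) = m by omega] at hC
      have hqe : (Q:ℝ)^((m+1)*(m+1)) = Q^(m*(m+2))*Q := by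
        rw [← pow_succ]
        congr 1
        ring
      set P : ℝ := Q^(m*(m+2)) with hP
      have hP0 : 0 < P := pow_pos hQ0 _
      have hcore := even_core (x := x) (u := u) (ε := u^(m+1)) (a := u^m) (b := u^(m+2))
        hx0 hu0 hu2 (by rw [hx4]; exact hQu) hx1 (pow_nonneg hu0.le _)
        (by rw [← pow_succ']) (by rw [← pow_succ']; ring)
      -- multiply core by P*Q
      have hPQ : 0 < P * Q := mul_pos hP0 hQ0
      have hmain : (P*Q) * (x⁻¹ * (2 - (9/2)*x^2*u^(m+1))) ≤
          (P*Q) * (1 - 2*u^(m+1)) + 2*P*(1 - u^m - u^(m+2)) := by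
        have h1 := mul_le_mul_of_nonneg_left hcore hPQ.le
        have h2 : (P*Q) * ((1 - 2*u^(m+1)) + 2*u*(1 - u^m - u^(m+2))) =
            (P*Q) * (1 - 2*u^(m+1)) + 2*P*(1 - u^m - u^(m+2)) := by
          have hpq2 : P * Q * (2*u) = 2*P := by
            rw [show P*Q*(2*u) = 2*P*(Q*u) by ring, hQu, mul_one]
          linear_combination (1 - u^m - u^(m+2)) * hpq2
        linarith [h1, h2.symm.le]
      -- now combine with gauss bounds
      have hgal : DD u * ((P*Q) * (1 - 2*u^(m+1))) + DD u * (2*P*(1 - u^m - u^(m+2))) ≤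
          galoisR Q n' := by
        have hsub : ({m, m+1, m+2} : Finset ℕ) ⊆ Finset.range (n'+1) := by
          intro t ht
          have h' : t = m ∨ t = m+1 ∨ t = m+2 := by simpa using ht
          rw [Finset.mem_range, hn']
          omega
        have hsum : ∑ t ∈ ({m, m+1, m+2} : Finset ℕ), gaussR Q n' t ≤ galoisR Q n' := by
          rw [galoisR]
          refine Finset.sum_le_sum_of_subset_of_nonneg hsub (fun t ht _ => ?_)
          exact gauss_nonneg hQ n' t (by have := Finset.mem_range.1 ht; omega)
        have hps : ∑ t ∈ ({m, m+1, m+2} : Finset ℕ), gaussR Q n' t =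
            gaussR Q n' m + gaussR Q n' (m+1) + gaussR Q n' (m+2) := by
          rw [Finset.sum_insert (by simp only [Finset.mem_insert, Finset.mem_singleton]; omega),
            Finset.sum_insert (by simp only [Finset.mem_singleton]; omega),
            Finset.sum_singleton]
          ring
        rw [hps] at hsum
        refine le_trans ?_ hsum
        have e1 : DD u * ((P*Q) * (1 - 2*u^(m+1))) =
            DD u * Q^((m+1)*(m+1)) * (1 - u^(m+1) - u^(m+1)) := by
          rw [hqe]; ring
        have e2 : DD u * (2*P*(1 - u^m - u^(m+2))) =
            DD u * Q^(m*(m+2)) * (1 - u^m - u^(m+2)) +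
            DD u * Q^((m+2)*m) * (1 - u^(m+2) - u^m) := by
          rw [show (m+2)*m = m*(m+2) by ring]; ring
        rw [e1, e2]
        linarith [hA, hB, hC]
      rw [hE1, hE2]
      calc DD u * (Q^((m+1)*(m+1)) * x⁻¹) * (2 - 9/2 * (x^2 * u^(m+1)))
          = DD u * ((P*Q) * (x⁻¹ * (2 - (9/2)*x^2*u^(m+1)))) := by rw [hqe]; ring
      _ ≤ DD u * ((P*Q) * (1 - 2*u^(m+1)) + 2*P*(1 - u^m - u^(m+2))) :=
          mul_le_mul_of_nonneg_left hmain hDD0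
      _ = DD u * ((P*Q) * (1 - 2*u^(m+1))) + DD u * (2*P*(1 - u^m - u^(m+2))) := by ring
      _ ≤ galoisR Q n' := hgal
    · -- odd case
      obtain ⟨M, hM⟩ := ho
      subst hM
      set n' : ℕ := 2*M+1 with hn'
      have hO1 : Q ^ (((n':ℕ):ℝ)^2/4 - 1/4) = Q^(M*(M+1)) := by
        rw [show (((n':ℕ)):ℝ)^2/4 - 1/4 = ((M*(M+1):ℕ):ℝ) by rw [hn']; push_cast; ring]
        rw [Real.rpow_natCast]
      have hO2 : Q ^ ((1 - ((n':ℕ):ℝ))/2) = u^M := by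
        rw [show (1 - (((n':ℕ)):ℝ))/2 = -((M:ℕ):ℝ) by rw [hn']; push_cast; ring]
        rw [Real.rpow_neg hQ0.le, Real.rpow_natCast, hudef, inv_pow]
      have hA := gauss_ge hQ n' M (by omega)
      rw [show n' - M = M+1 by omega] at hA
      have hB := gauss_ge hQ n' (M+1) (by omega)
      rw [show n' - (M+1) = M by omega, show (M+1)*M = M*(M+1) by ring] at hB
      have hsub : ({M, M+1} : Finset ℕ) ⊆ Finset.range (n'+1) := by
        intro t ht
        have h' : t = M ∨ t = M+1 := by simpa using ht
        rw [Finset.mem_range, hn']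
        omega
      have hsum : ∑ t ∈ ({M, M+1} : Finset ℕ), gaussR Q n' t ≤ galoisR Q n' := by
        rw [galoisR]
        refine Finset.sum_le_sum_of_subset_of_nonneg hsub (fun t ht _ => ?_)
        exact gauss_nonneg hQ n' t (by have := Finset.mem_range.1 ht; omega)
      rw [Finset.sum_pair (by omega)] at hsum
      have hcoef : 2 - 9/2 * u^M ≤ (1 - u^M - u^(M+1)) + (1 - u^(M+1) - u^M) := by
        have hpow : u^(M+1) = u^M * u := pow_succ u M
        nlinarith [pow_nonneg hu0.le M]
      have hDQ : 0 ≤ DD u * Q^(M*(M+1)) := mul_nonneg hDD0 (pow_pos hQ0 _).le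
      rw [hO1, hO2]
      calc DD u * Q^(M*(M+1)) * (2 - 9/2 * u^M)
          ≤ DD u * Q^(M*(M+1)) * ((1 - u^M - u^(M+1)) + (1 - u^(M+1) - u^M)) :=
            mul_le_mul_of_nonneg_left hcoef hDQ
      _ = DD u * Q^(M*(M+1)) * (1 - u^M - u^(M+1)) +
          DD u * Q^(M*(M+1)) * (1 - u^(M+1) - u^M) := by ring
      _ ≤ gaussR Q n' M + gaussR Q n' (M+1) := add_le_add hA hB
      _ ≤ galoisR Q n' := hsum
  · -- upper bound for the Galois number
    rw [hD]
    have hstep1 : galoisR Q n ≤ DD u * ∑ j ∈ Finset.range (n+1), Q^(j*(n-j)) := by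
      rw [galoisR, Finset.mul_sum]
      refine Finset.sum_le_sum (fun j hj => ?_)
      exact gauss_le hQ n j (by have := Finset.mem_range.1 hj; omega)
    have hterm : ∀ j ∈ Finset.range (n+1),
        (Q:ℝ)^(j*(n-j)) = Q^(((n:ℕ):ℝ)^2/4) * Q^(-((((n:ℕ):ℝ) - 2*j)^2/4)) := by
      intro j hj
      have hjn : j ≤ n := by have := Finset.mem_range.1 hj; omega
      rw [← Real.rpow_add hQ0]
      rw [show ((n:ℕ):ℝ)^2/4 + (-((((n:ℕ):ℝ) - 2*j)^2/4)) = ((j*(n-j):ℕ):ℝ) by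
        push_cast [Nat.cast_sub hjn]; ring]
      rw [Real.rpow_natCast]
    have hstep2 : ∑ j ∈ Finset.range (n+1), (Q:ℝ)^(j*(n-j)) =
        Q^(((n:ℕ):ℝ)^2/4) * ∑ j ∈ Finset.range (n+1), Q^(-((((n:ℕ):ℝ) - 2*j)^2/4)) := by
      rw [Finset.mul_sum]
      exact Finset.sum_congr rfl hterm
    have htheta : ∑ j ∈ Finset.range (n+1), Q^(-((((n:ℕ):ℝ) - 2*j)^2/4)) ≤ Cfun Q := by
      rcases Nat.even_or_odd n with he | ho
      · obtain ⟨r, hr⟩ := he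
        have h2M : n = 2 * r := by omega
        subst h2M
        exact even_theta hQ r
      · obtain ⟨M, hM⟩ := ho
        subst hM
        have := odd_theta q hq M
        rw [show 2*M+1+1 = 2*M+2 by omega]
        exact this
    have hrp : (0:ℝ) ≤ Q^(((n:ℕ):ℝ)^2/4) := (Real.rpow_pos_of_pos hQ0 _).le
    calc galoisR Q n ≤ DD u * ∑ j ∈ Finset.range (n+1), Q^(j*(n-j)) := hstep1
    _ = DD u * (Q^(((n:ℕ):ℝ)^2/4) * ∑ j ∈ Finset.range (n+1), Q^(-((((n:ℕ):ℝ) - 2*j)^2/4))) := by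
        rw [hstep2]
    _ ≤ DD u * (Q^(((n:ℕ):ℝ)^2/4) * Cfun Q) := by
        refine mul_le_mul_of_nonneg_left ?_ hDD0
        exact mul_le_mul_of_nonneg_left htheta hrp
    _ = Cfun Q * DD u * Q^(((n:ℕ):ℝ)^2/4) := by ring
end
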